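/- arXiv:math/0504352 — 6 statements merged into one kernel-verified Lean document; each statement's English description precedes it below -/
import Mathlib

section
/- For integers $n \geq 1$, $0 \leq j \leq n-1$ and $m \geq 1$, one has $\sum_{i=j+1}^{n} \binom{n}{i}\binom{j+m-1}{i-1}\binom{i-1}{j} = \sum_{i=1}^{n-j} \binom{n-i}{j}\binom{m+n-i-1}{n-i}$. -/
/-!
Both sides equal `C(j+m-1, j) · C(n+m-1, n-j-1)`. On the left, the trinomial revision
`C(a, i-1) C(i-1, j) = C(a, j) C(a-j, i-1-j)` pulls out `C(a, j)` and Vandermonde's identity sums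
what is left. On the right, after substituting `t = n - i`, the revision
`C(t, j) C(t+m-1, t) = C(j+m-1, j) C(t+m-1, j+m-1)` pulls out the same factor and the
hockey-stick identity sums what is left.
-/

open Finset

namespace Nat

theorem sum_Icc_choose_mul_choose_sub (n b s : ℕ) (hs : s ≤ n) :
    ∑ i ∈ Icc s n, n.choose i * b.choose (i - s) = (b + n).choose (n - s) := by
  rw [← Ico_add_one_right_eq_Icc, sum_Ico_eq_sum_range, show n + 1 - s = n - s + 1 by omega,
    add_choose_eq, Finset.Nat.sum_antidiagonal_eq_sum_range_succ_mk]
  refine sum_congr rfl fun k hk => ?_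
  rw [mem_range] at hk
  rw [add_tsub_cancel_left, mul_comm, choose_symm_of_eq_add (show n = n - s - k + (s + k) by omega)]

theorem choose_mul_add_choose_self (t j c : ℕ) (h : j ≤ t) :
    t.choose j * (t + c).choose t = (j + c).choose j * (t + c).choose (j + c) := by
  rw [mul_comm, choose_mul h, mul_comm ((j + c).choose j), choose_mul (le_add_right j c),
    add_tsub_cancel_left, choose_symm_of_eq_add (show t + c - j = t - j + c by omega)]

theorem sum_choose_mul_choose_mul_choose (n j a : ℕ) (h : j < n) :
    ∑ i ∈ Icc (j + 1) n, n.choose i * a.choose (i - 1) * (i - 1).choose j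
      = a.choose j * (a - j + n).choose (n - (j + 1)) := by
  rw [← sum_Icc_choose_mul_choose_sub n (a - j) (j + 1) h, mul_sum]
  refine sum_congr rfl fun i hi => ?_
  rw [mem_Icc] at hi
  rw [mul_assoc, choose_mul (by omega), show i - 1 - j = i - (j + 1) by omega]
  ring

theorem sum_Ico_choose_mul_add_choose_self (n j c : ℕ) (h : j < n) :
    ∑ t ∈ Ico j n, t.choose j * (t + c).choose t
      = (j + c).choose j * (n + c).choose (n - (j + 1)) := by
  have hockey := sum_range_add_choose (n - (j + 1)) (j + c)
  rw [show n - (j + 1) + (j + c) + 1 = n + c by omega,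
    choose_symm_of_eq_add (show n + c = j + c + 1 + (n - (j + 1)) by omega)] at hockey
  rw [← hockey, mul_sum, sum_Ico_eq_sum_range, show n - j = n - (j + 1) + 1 by omega]
  refine sum_congr rfl fun k _ => ?_
  rw [choose_mul_add_choose_self _ _ _ (le_add_right j k), add_comm k, add_right_comm j k]

end Nat

/-- For integers `n ≥ 1`, `0 ≤ j ≤ n-1` and `m ≥ 1`,
`∑_{i=j+1}^{n} C(n,i) C(j+m-1,i-1) C(i-1,j) = ∑_{i=1}^{n-j} C(n-i,j) C(m+n-i-1,n-i)`. -/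
theorem sum_choose_identity (n j m : ℕ) (hn : 1 ≤ n) (hj : j ≤ n - 1) (hm : 1 ≤ m) :
    ∑ i ∈ Finset.Icc (j + 1) n, n.choose i * (j + m - 1).choose (i - 1) * (i - 1).choose j
      = ∑ i ∈ Finset.Icc 1 (n - j), (n - i).choose j * (m + n - i - 1).choose (n - i) := by
  have hjn : j < n := by omega
  have hreflect := sum_Ico_reflect (fun t => t.choose j * (t + (m - 1)).choose t) 1
    (show n - j + 1 ≤ n + 1 by omega)
  rw [show n + 1 - (n - j + 1) = j by omega, add_tsub_cancel_right, Ico_add_one_right_eq_Icc]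
    at hreflect
  calc _ = (j + (m - 1)).choose j * (n + (m - 1)).choose (n - (j + 1)) := by
        rw [Nat.sum_choose_mul_choose_mul_choose n j _ hjn, show j + m - 1 = j + (m - 1) by omega,
          add_tsub_cancel_left, add_comm (m - 1) n]
    _ = ∑ t ∈ Ico j n, t.choose j * (t + (m - 1)).choose t :=
        (Nat.sum_Ico_choose_mul_add_choose_self n j (m - 1) hjn).symm
    _ = _ := by
        rw [← hreflect]
        refine sum_congr rfl fun i hi => ?_
        rw [mem_Icc] at hi
        rw [show n - i + (m - 1) = m + n - i - 1 by omega]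
end

section
/- Fix integers $n \geq 1$, $0 \leq j \leq n-1$. For $m \geq 1-j$ and $0 \leq r \leq n-1$, define $S_{m,r} = \sum_{i=j+1}^{n} \binom{n}{i}\binom{j+m-1}{i-1-r}\binom{i-1}{j}$ and $T_{m,r} = \sum_{i=1}^{n-j} \binom{n-i}{j}\binom{m+n-i-1}{n-i-r}$. Then $S_{m,r} = T_{m,r}$ for all such $m$ and $r$. -/
/-! Substituting `k = i - 1` in `S` and `k = n - i` in `T`, and writing `M = j + m - 1 ≥ 0`, the
identity becomes `∑_{k<n} C(n,k+1) C(k,j) C(M,k-r) = ∑_{k<n} C(k,j) C(M+k-j,k-r)` for every `r`.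
By Pascal's rule in the upper index both sides satisfy `F(M+1,r) = F(M,r+1) + F(M,r)`, so induction
on `M` reduces it to `M = 0`. There both sides equal `C(n,r+1) C(r,j)`: on the left only `k = r`
survives, and on the right `C(k,j) C(k-j,r-j) = C(k,r) C(r,j)` turns the sum into the hockey stick
`∑_{k<n} C(k,r) = C(n,r+1)`. -/

open Finset

/-- Integer binomial coefficient: `chooseZ a b` is the binomial coefficient `C(a, b)`,
which vanishes when `b < 0` or `b > a`, and satisfies `chooseZ 0 0 = 1`. -/
def chooseZ (a b : ℤ) : ℤ :=
  if 0 ≤ b ∧ b ≤ a then (a.toNat.choose b.toNat : ℤ) else 0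

theorem chooseZ_natCast (a b : ℕ) : chooseZ a b = a.choose b := by
  unfold chooseZ
  split_ifs
  · simp
  · rw [Nat.choose_eq_zero_of_lt (by omega), Nat.cast_zero]

theorem chooseZ_of_neg {a b : ℤ} (hb : b < 0) : chooseZ a b = 0 :=
  if_neg (by omega)

theorem chooseZ_of_lt {a b : ℤ} (hab : a < b) : chooseZ a b = 0 :=
  if_neg (by omega)

theorem chooseZ_symm (a b : ℤ) : chooseZ a (a - b) = chooseZ a b := by
  unfold chooseZ
  split_ifs <;> try first | rfl | omega
  lift a to ℕ using by omega
  lift b to ℕ using by omega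
  rw [show ((a : ℤ) - b).toNat = a - b by omega, Int.toNat_natCast, Int.toNat_natCast,
    Nat.choose_symm (by omega)]

theorem chooseZ_add_one_left {a : ℤ} (ha : 0 ≤ a) (b : ℤ) :
    chooseZ (a + 1) b = chooseZ a (b - 1) + chooseZ a b := by
  lift a to ℕ using ha
  rcases lt_trichotomy b 0 with hb | rfl | hb
  · rw [chooseZ_of_neg hb, chooseZ_of_neg hb, chooseZ_of_neg (by omega), add_zero]
  · rw [chooseZ_of_neg (b := 0 - 1) (by norm_num), zero_add, ← Nat.cast_succ, ← Nat.cast_zero,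
      chooseZ_natCast, chooseZ_natCast, Nat.choose_zero_right, Nat.choose_zero_right]
  · lift b to ℕ using hb.le
    obtain ⟨b, rfl⟩ : ∃ c, b = c + 1 := ⟨b - 1, by omega⟩
    push_cast
    rw [add_sub_cancel_right, ← Nat.cast_succ, ← Nat.cast_succ, chooseZ_natCast, chooseZ_natCast,
      chooseZ_natCast, Nat.choose_succ_succ', Nat.cast_add]

theorem sum_range_choose_eq_choose_add_one (n r : ℕ) :
    ∑ k ∈ range n, k.choose r = n.choose (r + 1) := by
  induction n with
  | zero => simp
  | succ n ih => rw [sum_range_succ, ih, Nat.choose_succ_succ', add_comm]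

theorem sum_Icc_one_eq_sum_range {β : Type*} [AddCommMonoid β] (f : ℕ → β) (n : ℕ) :
    ∑ i ∈ Icc 1 n, f i = ∑ k ∈ range n, f (k + 1) := by
  rw [range_eq_Ico, sum_Ico_add', ← Ico_add_one_right_eq_Icc]

theorem choose_mul_chooseZ_sub_sub (k j r : ℕ) :
    (k.choose j : ℤ) * chooseZ ((k : ℤ) - j) ((k : ℤ) - r) = k.choose r * r.choose j := by
  rcases lt_or_ge k j with hkj | hjk
  · rw [Nat.choose_eq_zero_of_lt hkj, Nat.cast_zero, zero_mul]
    rcases lt_or_ge k r with hkr | hrk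
    · rw [Nat.choose_eq_zero_of_lt hkr, Nat.cast_zero, zero_mul]
    · rw [Nat.choose_eq_zero_of_lt (hrk.trans_lt hkj), Nat.cast_zero, mul_zero]
  rw [← chooseZ_symm, show (k : ℤ) - j - (k - r) = r - j by ring]
  rcases lt_or_ge r j with hrj | hjr
  · rw [chooseZ_of_neg (by omega), Nat.choose_eq_zero_of_lt hrj]
    simp
  · rw [← Nat.cast_sub hjk, ← Nat.cast_sub hjr, chooseZ_natCast]
    exact_mod_cast (Nat.choose_mul hjr).symm

theorem sum_range_choose_add_one_mul_chooseZ_zero (n j r : ℕ) :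
    ∑ k ∈ range n, (n.choose (k + 1) : ℤ) * k.choose j * chooseZ 0 ((k : ℤ) - r)
      = n.choose (r + 1) * r.choose j := by
  rw [sum_eq_single r]
  · rw [sub_self, ← Nat.cast_zero, chooseZ_natCast, Nat.choose_self, Nat.cast_one, mul_one]
  · intro k _ hkr
    rcases lt_or_gt_of_ne hkr with h | h
    · rw [chooseZ_of_neg (by omega), mul_zero]
    · rw [chooseZ_of_lt (by omega), mul_zero]
  · intro hr
    rw [Nat.choose_eq_zero_of_lt (by simpa using hr)]
    simp

theorem sum_range_choose_mul_chooseZ_sub_sub (n j r : ℕ) :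
    ∑ k ∈ range n, (k.choose j : ℤ) * chooseZ ((k : ℤ) - j) ((k : ℤ) - r)
      = n.choose (r + 1) * r.choose j := by
  simp_rw [choose_mul_chooseZ_sub_sub, ← sum_mul]
  exact_mod_cast congrArg (· * r.choose j) (sum_range_choose_eq_choose_add_one n r)

theorem sum_range_choose_add_one_mul_choose_mul_chooseZ (n j M r : ℕ) :
    ∑ k ∈ range n, (n.choose (k + 1) : ℤ) * k.choose j * chooseZ M ((k : ℤ) - r)
      = ∑ k ∈ range n, (k.choose j : ℤ) * chooseZ ((M : ℤ) + k - j) ((k : ℤ) - r) := by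
  induction M generalizing r with
  | zero =>
    simp only [Nat.cast_zero, zero_add]
    rw [sum_range_choose_add_one_mul_chooseZ_zero, sum_range_choose_mul_chooseZ_sub_sub]
  | succ M ih =>
    have hL (k : ℕ) : (n.choose (k + 1) : ℤ) * k.choose j * chooseZ ↑(M + 1) ((k : ℤ) - r)
        = n.choose (k + 1) * k.choose j * chooseZ M ((k : ℤ) - ↑(r + 1))
          + n.choose (k + 1) * k.choose j * chooseZ M ((k : ℤ) - r) := by
      rw [Nat.cast_succ, chooseZ_add_one_left M.cast_nonneg, Nat.cast_succ, sub_add_eq_sub_sub,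
        mul_add]
    have hR (k : ℕ) : (k.choose j : ℤ) * chooseZ (↑(M + 1) + k - j) ((k : ℤ) - r)
        = k.choose j * chooseZ ((M : ℤ) + k - j) ((k : ℤ) - ↑(r + 1))
          + k.choose j * chooseZ ((M : ℤ) + k - j) ((k : ℤ) - r) := by
      rcases lt_or_ge k j with hkj | hjk
      · simp [Nat.choose_eq_zero_of_lt hkj]
      rw [Nat.cast_succ, add_right_comm, add_sub_right_comm,
        chooseZ_add_one_left (by omega), Nat.cast_succ, sub_add_eq_sub_sub, mul_add]
    simp_rw [hL, hR, sum_add_distrib, ih]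

theorem sum_Icc_choose_mul_chooseZ_mul_choose_eq_sum_range (n j r : ℕ) (a : ℤ) :
    ∑ i ∈ Icc (j + 1) n, (n.choose i : ℤ) * chooseZ a ((i : ℤ) - 1 - r) * ((i - 1).choose j : ℤ)
      = ∑ k ∈ range n, (n.choose (k + 1) : ℤ) * k.choose j * chooseZ a ((k : ℤ) - r) := by
  rw [sum_subset (Icc_subset_Icc_left (Nat.le_add_left 1 j)) ?_, sum_Icc_one_eq_sum_range]
  · refine sum_congr rfl fun k _ => ?_
    rw [Nat.add_sub_cancel, Nat.cast_succ, add_sub_cancel_right, mul_right_comm]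
  · intro i hi hij
    simp only [mem_Icc] at hi hij
    rw [Nat.choose_eq_zero_of_lt (n := i - 1) (by omega), Nat.cast_zero, mul_zero]

theorem sum_Icc_choose_sub_mul_chooseZ_eq_sum_range (n j r : ℕ) (m : ℤ) :
    ∑ i ∈ Icc 1 (n - j), ((n - i).choose j : ℤ) * chooseZ (m + (n : ℤ) - i - 1) ((n : ℤ) - i - r)
      = ∑ k ∈ range n, (k.choose j : ℤ) * chooseZ (m + k - 1) ((k : ℤ) - r) := by
  rw [sum_subset (Icc_subset_Icc_right (Nat.sub_le n j)) ?_, sum_Icc_one_eq_sum_range,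
    ← sum_range_reflect]
  · refine sum_congr rfl fun k hk => ?_
    have hk := mem_range.mp hk
    obtain ⟨hk₁, hk₂⟩ : n - (n - 1 - k + 1) = k ∧ ((n - 1 - k + 1 : ℕ) : ℤ) = n - k := by omega
    rw [hk₁, hk₂]
    congr 2 <;> ring
  · intro i hi hij
    simp only [mem_Icc] at hi hij
    rw [Nat.choose_eq_zero_of_lt (by omega), Nat.cast_zero, zero_mul]

theorem S_eq_T_general (n j : ℕ) (m : ℤ) (hm : 1 - (j : ℤ) ≤ m) (r : ℕ) :
    ∑ i ∈ Finset.Icc (j + 1) n,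
        (n.choose i : ℤ) * chooseZ ((j : ℤ) + m - 1) ((i : ℤ) - 1 - r) * ((i - 1).choose j : ℤ)
      = ∑ i ∈ Finset.Icc 1 (n - j),
        ((n - i).choose j : ℤ) * chooseZ (m + (n : ℤ) - i - 1) ((n : ℤ) - i - r) := by
  obtain ⟨M, hM⟩ : ∃ M : ℕ, (j : ℤ) + m - 1 = M := ⟨(j + m - 1).toNat, by omega⟩
  rw [sum_Icc_choose_mul_chooseZ_mul_choose_eq_sum_range,
    sum_Icc_choose_sub_mul_chooseZ_eq_sum_range, hM,
    sum_range_choose_add_one_mul_choose_mul_chooseZ]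
  refine sum_congr rfl fun k _ => ?_
  congr 2
  omega

/-- Fix integers `n ≥ 1`, `0 ≤ j ≤ n-1`. For `m ≥ 1-j` and `0 ≤ r ≤ n-1`,
`S_{m,r} = ∑_{i=j+1}^{n} C(n,i) C(j+m-1, i-1-r) C(i-1,j)` equals
`T_{m,r} = ∑_{i=1}^{n-j} C(n-i,j) C(m+n-i-1, n-i-r)`. -/
theorem S_eq_T (n j : ℕ) (hn : 1 ≤ n) (hj : j ≤ n - 1) (m : ℤ) (hm : 1 - (j : ℤ) ≤ m)
    (r : ℕ) (hr : r ≤ n - 1) :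
    ∑ i ∈ Finset.Icc (j + 1) n,
        (n.choose i : ℤ) * chooseZ ((j : ℤ) + m - 1) ((i : ℤ) - 1 - r) * ((i - 1).choose j : ℤ)
      = ∑ i ∈ Finset.Icc 1 (n - j),
        ((n - i).choose j : ℤ) * chooseZ (m + (n : ℤ) - i - 1) ((n : ℤ) - i - r) :=
  S_eq_T_general n j m hm r
end

section
/- For integers $n \geq 2$ and $m \geq 1$, let $U_n^m = \sum_{i=1}^{n-1} 2^{i-1}\binom{m+i-1}{i}$. Then $U_n^m + U_n^{m+1} = 2^{n-1}\binom{m+n-1}{n-1} - 1$. -/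
open Finset

lemma U_aux (m : ℕ) : ∀ k : ℕ, 1 ≤ k →
    (∑ i ∈ Finset.Icc 1 k, (2 : ℤ) ^ (i - 1) * ((m + i - 1).choose i : ℤ))
      + (∑ i ∈ Finset.Icc 1 k, (2 : ℤ) ^ (i - 1) * ((m + 1 + i - 1).choose i : ℤ))
      = 2 ^ k * (((m + k).choose k : ℤ)) - 1 := by
  intro k hk
  induction k with
  | zero => omega
  | succ k ih =>
    rcases Nat.eq_or_lt_of_le hk with h | h
    · simp [← h]
      ring
    · have hk1 : 1 ≤ k := by omega
      rw [Finset.sum_Icc_succ_top hk, Finset.sum_Icc_succ_top hk]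
      have := ih hk1
      have h1 : m + (k + 1) - 1 = m + k := by omega
      have h2 : m + 1 + (k + 1) - 1 = m + k + 1 := by omega
      have h3 : (m + k + 1).choose (k + 1) = (m + k).choose k + (m + k).choose (k + 1) :=
        Nat.choose_succ_succ _ _
      rw [h1, h2] at *
      have h4 : m + (k + 1) = m + k + 1 := by omega
      simp only [Nat.add_sub_cancel, h4]
      push_cast [h3, pow_succ]
      linear_combination this

/-- For `n ≥ 2` and `m ≥ 1`, with `Uₙᵐ = ∑_{i=1}^{n-1} 2^{i-1} C(m+i-1, i)`,
we have `Uₙᵐ + Uₙ^{m+1} = 2^{n-1} C(m+n-1, n-1) - 1`. -/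
theorem U_add_U_succ (n m : ℕ) (hn : 2 ≤ n) (hm : 1 ≤ m) :
    (∑ i ∈ Finset.Icc 1 (n - 1), (2 : ℤ) ^ (i - 1) * ((m + i - 1).choose i : ℤ))
      + (∑ i ∈ Finset.Icc 1 (n - 1), (2 : ℤ) ^ (i - 1) * ((m + 1 + i - 1).choose i : ℤ))
      = 2 ^ (n - 1) * (((m + n - 1).choose (n - 1) : ℤ)) - 1 := by
  have h : m + n - 1 = m + (n - 1) := by omega
  rw [h]
  exact U_aux m (n - 1) (by omega)
end

section
/- For integers $n \geq 2$ and $m \geq 1$, define $R_m = \sum_{i=1}^{n-1} 2^{i-1}\binom{m+i-1}{i} + \varepsilon_m$ where $\varepsilon_m = 1$ if $m$ is even and $0$ if $m$ is odd. Then $R_m + R_{m+1} = 2^{n-1}\binom{m+n-1}{n-1}$. -/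
open Finset

lemma rank_aux (m k : ℕ) (hk : 1 ≤ k) :
    (∑ i ∈ Finset.Icc 1 k, 2 ^ (i - 1) * ((m + i - 1).choose i + (m + i).choose i)) + 1
      = 2 ^ k * (m + k).choose k := by
  induction k with
  | zero => omega
  | succ k ih =>
    rcases Nat.eq_or_lt_of_le hk with h | h
    · simp [← h]
      omega
    · have hk1 : 1 ≤ k := by omega
      rw [Finset.sum_Icc_succ_top (by omega : 1 ≤ k + 1)]
      have ih' := ih hk1
      have hpascal : (m + (k + 1)).choose (k + 1) = (m + k).choose k + (m + k).choose (k + 1) := by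
        have : m + (k + 1) = (m + k) + 1 := by ring
        rw [this, Nat.choose_succ_succ]
      have h1 : m + (k + 1) - 1 = m + k := by omega
      have h2 : (k+1) - 1 = k := by omega
      rw [h1, h2, add_right_comm, ih', hpascal, pow_succ]
      ring

/-- For `n ≥ 2`, `m ≥ 1`, define `R m = ∑_{i=1}^{n-1} 2^{i-1} C(m+i-1,i) + ε_m` with
`ε_m = 1` if `m` is even and `0` if `m` is odd. Then `R m + R (m+1) = 2^{n-1} C(m+n-1,n-1)`. -/
theorem rank_add_rank_succ (n m : ℕ) (hn : 2 ≤ n) (hm : 1 ≤ m)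
    (R : ℕ → ℕ)
    (hR : ∀ l, R l = (∑ i ∈ Finset.Icc 1 (n - 1), 2 ^ (i - 1) * (l + i - 1).choose i)
      + if Even l then 1 else 0) :
    R m + R (m + 1) = 2 ^ (n - 1) * (m + n - 1).choose (n - 1) := by
  have hk : 1 ≤ n - 1 := by omega
  have haux := rank_aux m (n - 1) hk
  rw [hR m, hR (m + 1)]
  have hsum : (∑ i ∈ Finset.Icc 1 (n - 1), 2 ^ (i - 1) * (m + i - 1).choose i)
      + (∑ i ∈ Finset.Icc 1 (n - 1), 2 ^ (i - 1) * (m + 1 + i - 1).choose i)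
      = ∑ i ∈ Finset.Icc 1 (n - 1), 2 ^ (i - 1) * ((m + i - 1).choose i + (m + i).choose i) := by
    rw [← Finset.sum_add_distrib]
    apply Finset.sum_congr rfl
    intro i hi
    have : m + 1 + i - 1 = m + i := by omega
    rw [this, Nat.mul_add]
  have hind : (if Even m then (1:ℕ) else 0) + (if Even (m + 1) then (1:ℕ) else 0) = 1 := by
    rcases Nat.even_or_odd m with h | h
    · simp [h, Nat.even_add_one, Nat.not_even_iff_odd, h.add_one]
    · simp [Nat.not_even_iff_odd.mpr h, h.add_one]
  have hmn : m + n - 1 = m + (n - 1) := by omega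
  rw [hmn]
  omega
end

section
/- For integers $n \geq 2$ and $m \geq 0$, one has $\sum_{i=1}^{n}\binom{n}{i}\sum_{0 \leq j \leq i-1,\ j \equiv n+m \pmod 2} \binom{j+m}{i-1}\binom{i-1}{j} = \sum_{i=1}^{n-1} 2^{i-1}\binom{m+i}{i} + \varepsilon$, where $\varepsilon = 1$ if $n+m$ is even and $\varepsilon = 0$ if $n+m$ is odd. -/
/-!
Swapping the two sums and applying trinomial revision `C(j+m, k) C(k, j) = C(j+m, j) C(m, k-j)`
followed by Vandermonde's identity turns the left side into
`∑_{j < n, j ≡ r} C(m+j, j) C(n+m, m+j+1)` with `r = (n+m) % 2`. For fixed `r`, Pascal's rule in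
`n` shows that this sum grows from `n` to `n+1` by `C(n+m, m) ∑_{j ≡ r} C(n, j) = 2^(n-1) C(m+n, n)`,
since each parity class carries half of a row of Pascal's triangle. At `n = 1` only `j = 0`
survives, which is the `ε`.
-/

open Finset

theorem two_mul_sum_filter_mod_two {R : Type*} [CommRing R] (s : Finset ℕ) {r : ℕ} (hr : r < 2)
    (f : ℕ → R) :
    2 * ∑ j ∈ s with j % 2 = r, f j
      = ∑ j ∈ s, f j + (-1) ^ r * ∑ j ∈ s, (-1) ^ j * f j := by
  rw [sum_filter, mul_sum, mul_sum, ← sum_add_distrib]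
  refine sum_congr rfl fun j _ => ?_
  rw [neg_one_pow_eq_pow_mod_two (R := R) j]
  rcases Nat.mod_two_eq_zero_or_one j with h | h <;> interval_cases r <;> simp [h] <;> ring

theorem sum_range_filter_mod_two_choose {N r : ℕ} (hN : N ≠ 0) (hr : r < 2) :
    ∑ j ∈ range (N + 1) with j % 2 = r, N.choose j = 2 ^ (N - 1) := by
  have h := two_mul_sum_filter_mod_two (range (N + 1)) hr (fun j => (N.choose j : ℤ))
  rw [Int.alternating_sum_range_choose_of_ne hN, mul_zero, add_zero] at h
  obtain ⟨K, rfl⟩ := Nat.exists_eq_succ_of_ne_zero hN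
  have two_mul_eq : (2 : ℤ) * ∑ j ∈ range (K + 2) with j % 2 = r, ((K + 1).choose j : ℤ) = 2 * 2 ^ K := by
    rw [h, ← Nat.cast_sum, Nat.sum_range_choose]; push_cast; ring
  exact_mod_cast mul_left_cancel₀ two_ne_zero two_mul_eq

theorem sum_Icc_choose_sub_mul_choose {k n : ℕ} (m : ℕ) (hk : k ≤ n) :
    ∑ i ∈ Icc k n, m.choose (i - k) * n.choose i = (n + m).choose (m + k) := by
  rw [Nat.choose_symm_of_eq_add (show n + m = m + k + (n - k) by omega), add_comm n m,
    Nat.add_choose_eq, Nat.sum_antidiagonal_eq_sum_range_succ (fun a b => m.choose a * n.choose b),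
    ← Ico_add_one_right_eq_Icc, sum_Ico_eq_sum_range, show n + 1 - k = n - k + 1 by omega]
  refine sum_congr rfl fun t ht => ?_
  rw [mem_range] at ht
  rw [Nat.add_sub_cancel_left, ← Nat.choose_symm (by omega : k + t ≤ n)]
  congr 2
  omega

theorem sum_Icc_choose_mul_choose_mul_choose {n j : ℕ} (m : ℕ) (hj : j < n) :
    ∑ i ∈ Icc (j + 1) n, n.choose i * ((j + m).choose (i - 1) * (i - 1).choose j)
      = (m + j).choose j * (n + m).choose (m + j + 1) := by
  calc _ = ∑ i ∈ Icc (j + 1) n, (m + j).choose j * (m.choose (i - (j + 1)) * n.choose i) := by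
        refine sum_congr rfl fun i hi => ?_
        rw [mem_Icc] at hi
        rw [Nat.choose_mul (by omega : j ≤ i - 1), Nat.add_sub_cancel_left, Nat.sub_sub,
          add_comm 1 j, add_comm j m]
        ring
    _ = _ := by rw [← mul_sum, sum_Icc_choose_sub_mul_choose m hj, add_assoc]

theorem sum_Icc_choose_mul_sum_filter (n m : ℕ) (p : ℕ → Prop) [DecidablePred p] :
    ∑ i ∈ Icc 1 n, n.choose i *
        ∑ j ∈ range i with p j, (j + m).choose (i - 1) * (i - 1).choose j
      = ∑ j ∈ range n with p j, (m + j).choose j * (n + m).choose (m + j + 1) := by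
  simp_rw [mul_sum]
  rw [sum_comm' (t' := (range n).filter p) (s' := fun j => Icc (j + 1) n)]
  · refine sum_congr rfl fun j hj => ?_
    exact sum_Icc_choose_mul_choose_mul_choose m (mem_range.mp (mem_filter.mp hj).1)
  · intro i j
    simp only [mem_Icc, mem_filter, mem_range]
    grind

theorem add_choose_mul_add_choose (N m j : ℕ) :
    (m + j).choose j * (N + m).choose (m + j) = (N + m).choose m * N.choose j := by
  rw [← Nat.choose_symm_add, mul_comm, Nat.choose_mul (Nat.le_add_right m j),
    Nat.add_sub_cancel_right, Nat.add_sub_cancel_left]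

theorem sum_range_filter_mod_two_choose_mul_choose (m : ℕ) {r : ℕ} (hr : r < 2) (N : ℕ) :
    ∑ j ∈ range (N + 1) with j % 2 = r, (m + j).choose j * (N + 1 + m).choose (m + j + 1)
      = (∑ i ∈ Icc 1 N, 2 ^ (i - 1) * (m + i).choose i) + if r = 0 then 1 else 0 := by
  induction N with
  | zero => interval_cases r <;> simp [filter_singleton, add_comm 1 m]
  | succ N ih =>
    have pascal (j : ℕ) : (N + 1 + 1 + m).choose (m + j + 1)
        = (N + 1 + m).choose (m + j) + (N + 1 + m).choose (m + j + 1) := by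
      rw [Nat.add_right_comm _ 1 m, Nat.choose_succ_succ']
    have top : (N + 1 + m).choose (m + (N + 1) + 1) = 0 :=
      Nat.choose_eq_zero_of_lt (by omega)
    simp_rw [pascal, mul_add, sum_add_distrib, add_choose_mul_add_choose, ← mul_sum,
      sum_range_filter_mod_two_choose (Nat.add_one_ne_zero N) hr, Nat.add_sub_cancel]
    rw [sum_filter, sum_range_succ, top, mul_zero, ite_self, add_zero, ← sum_filter, ih,
      sum_Icc_succ_top (by omega), Nat.add_sub_cancel, add_comm (N + 1) m, Nat.choose_symm_add]
    ring

/-- For `n ≥ 2` and `m ≥ 0`,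
`∑_{i=1}^{n} C(n,i) ∑_{0 ≤ j ≤ i-1, j ≡ n+m (mod 2)} C(j+m, i-1) C(i-1, j)
  = ∑_{i=1}^{n-1} 2^{i-1} C(m+i, i) + ε`, where `ε = 1` if `n+m` is even, else `0`. -/
theorem rank_tau_cohomology_eq (n m : ℕ) (hn : 2 ≤ n) :
    ∑ i ∈ Finset.Icc 1 n, n.choose i *
        ∑ j ∈ (Finset.range i).filter (fun j => j % 2 = (n + m) % 2),
          (j + m).choose (i - 1) * (i - 1).choose j
      = (∑ i ∈ Finset.Icc 1 (n - 1), 2 ^ (i - 1) * (m + i).choose i)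
        + if Even (n + m) then 1 else 0 := by
  obtain ⟨N, rfl⟩ : ∃ N, n = N + 1 := ⟨n - 1, by omega⟩
  rw [sum_Icc_choose_mul_sum_filter, Nat.add_sub_cancel,
    sum_range_filter_mod_two_choose_mul_choose m (Nat.mod_lt _ two_pos)]
  simp only [Nat.even_iff]
end

section
/- Let $k$ be a field with $\mathrm{char}\,k \neq 2$ and let $\Lambda$ be the exterior algebra on $n \geq 2$ generators $x_1,\dots,x_n$ over $k$ (the quotient of the free algebra by the relations $x_i^2 = 0$ and $x_i x_j + x_j x_i = 0$ for $i < j$). Then the commutator subspace $[\Lambda,\Lambda]$ (spanned by all $ab - ba$) has dimension $2^{n-1} - 1$, and consequently $\dim_k \Lambda/[\Lambda,\Lambda] = 2^{n-1} + 1$. -/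
/-!
By bilinearity, `[Λ, Λ]` is spanned by the commutators of basis monomials `e_s`.
Homogeneous elements supercommute, `x * y = (-1) ^ (|x| |y|) • y * x`, so `[e_s, e_t]`
vanishes unless `s` and `t` are disjoint of odd size, in which case it is `±2 e_{s ∪ t}`.
Conversely, every `e_u` with `|u|` even and positive is `±½ [e_i, e_{u \ i}]` for any `i ∈ u`.
Hence `[Λ, Λ]` has basis the monomials of even positive degree, and an alternating-sum count
shows there are `2^(n-1) - 1` of them.
-/

open ExteriorAlgebra Finset Module

theorem Finset.two_mul_card_filter_even_card {α : Type*} [Fintype α] [Nonempty α] :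
    2 * #{s : Finset α | Even #s} = 2 ^ Fintype.card α := by
  have hsum := card_filter_add_card_filter_not (s := (univ : Finset (Finset α))) (Even ·.card)
  have halt : ∑ s : Finset α, (-1 : ℤ) ^ #s = 0 := by
    rw [← powerset_univ, sum_powerset_neg_one_pow_card_of_nonempty univ_nonempty]
  rw [← sum_filter_add_sum_filter_not _ (Even ·.card),
    sum_congr rfl fun s hs => (mem_filter.1 hs).2.neg_one_pow,
    sum_congr rfl fun s hs => (Nat.not_even_iff_odd.1 (mem_filter.1 hs).2).neg_one_pow] at halt
  simp only [sum_const, nsmul_eq_mul, mul_one, mul_neg] at halt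
  rw [card_univ, Fintype.card_finset] at hsum
  omega

theorem Finset.card_filter_even_card_nonempty_add_one {α : Type*} [Fintype α] [Nonempty α] :
    #{s : Finset α | Even #s ∧ s.Nonempty} + 1 = 2 ^ (Fintype.card α - 1) := by
  classical
  have hfilter : ({s : Finset α | Even #s ∧ s.Nonempty} : Finset (Finset α)) =
      ({s | Even #s} : Finset (Finset α)).erase ∅ := by
    ext s
    simp [nonempty_iff_ne_empty, and_comm]
  have hpow : 2 ^ Fintype.card α = 2 * 2 ^ (Fintype.card α - 1) := by
    rw [← pow_succ', Nat.sub_add_cancel Fintype.card_pos]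
  have htwo := two_mul_card_filter_even_card (α := α)
  rw [hfilter, card_erase_add_one (by simp)]
  omega

theorem Submodule.span_commutators_eq_span_image2 {R A : Type*} [CommRing R] [Ring A]
    [Algebra R A] {s : Set A} (hs : span R s = ⊤) :
    span R {z | ∃ x y : A, z = x * y - y * x} =
      span R (Set.image2 (fun x y => x * y - y * x) s s) := by
  let commutator : A →ₗ[R] A →ₗ[R] A := LinearMap.mul R A - (LinearMap.mul R A).flip
  have hmap₂ : ∀ t : Set A, span R t = ⊤ →
      map₂ commutator ⊤ ⊤ = span R (Set.image2 (fun x y => x * y - y * x) t t) := by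
    intro t ht
    rw [← ht, map₂_span_span]
    rfl
  rw [← hmap₂ s hs, hmap₂ Set.univ span_univ]
  congr 1
  ext z
  simp [eq_comm]

namespace ExteriorAlgebra

section CommRing

variable {R M : Type*} [CommRing R] [AddCommGroup M] [Module R M]

theorem ι_mul_ιMulti_comm (v : M) {n : ℕ} (w : Fin n → M) :
    ι R v * ιMulti R n w = (-1 : ℤˣ) ^ n • (ιMulti R n w * ι R v) := by
  induction n with
  | zero => simp
  | succ n ih =>
    rw [ιMulti_succ_apply, ← mul_assoc, eq_neg_of_add_eq_zero_left (ι_add_mul_swap v (w 0)),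
      neg_mul, mul_assoc, ih, mul_smul_comm, ← mul_assoc, pow_succ, mul_neg_one, Units.neg_smul]

theorem ιMulti_mul_ιMulti_comm {m n : ℕ} (v : Fin m → M) (w : Fin n → M) :
    ιMulti R m v * ιMulti R n w = (-1 : ℤˣ) ^ (m * n) • (ιMulti R n w * ιMulti R m v) := by
  induction m with
  | zero => simp
  | succ m ih =>
    rw [ιMulti_succ_apply, mul_assoc, ih, mul_smul_comm, ← mul_assoc, ι_mul_ιMulti_comm,
      smul_mul_assoc, smul_smul, mul_assoc, ← pow_add, Nat.succ_mul, add_comm]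

open Set.powersetCard

variable {I : Type*} [LinearOrder I] (b : Basis I R M)

theorem basis_mul_basis_comm (s t : Finset I) :
    b.ExteriorAlgebra s * b.ExteriorAlgebra t =
      (-1 : ℤˣ) ^ (#s * #t) • (b.ExteriorAlgebra t * b.ExteriorAlgebra s) := by
  simp only [basis_apply]
  exact ιMulti_mul_ιMulti_comm _ _

theorem basis_mul_basis_of_not_disjoint {s t : Finset I} (h : ¬Disjoint s t) :
    b.ExteriorAlgebra s * b.ExteriorAlgebra t = 0 :=
  basis_mul_of_not_disjoint b (ofCard rfl : Set.powersetCard I #s) (ofCard rfl) h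

theorem exists_basis_mul_basis_of_disjoint {s t : Finset I} (h : Disjoint s t) :
    ∃ u : ℤˣ,
      b.ExteriorAlgebra s * b.ExteriorAlgebra t = u • b.ExteriorAlgebra (s ∪ t) := by
  have hst := basis_mul_of_disjoint b (ofCard rfl : Set.powersetCard I #s) (ofCard rfl) h
  rw [← disjUnion_eq_union s t h]
  exact ⟨_, hst⟩

theorem commutator_basis_mem_span_even (s t : Finset I) :
    b.ExteriorAlgebra s * b.ExteriorAlgebra t - b.ExteriorAlgebra t * b.ExteriorAlgebra s ∈
      Submodule.span R (b.ExteriorAlgebra '' {u | Even #u ∧ u.Nonempty}) := by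
  by_cases h : Disjoint s t
  · obtain ⟨u, hu⟩ := exists_basis_mul_basis_of_disjoint b h
    rw [basis_mul_basis_comm b t s, hu]
    rcases Nat.even_or_odd (#t * #s) with heven | hodd
    · rw [heven.neg_one_pow, one_smul, sub_self]
      exact zero_mem _
    · obtain ⟨ht, hs⟩ := Nat.odd_mul.1 hodd
      have hmem : b.ExteriorAlgebra (s ∪ t) ∈
          Submodule.span R (b.ExteriorAlgebra '' {u | Even #u ∧ u.Nonempty}) := by
        refine Submodule.subset_span ⟨s ∪ t, ⟨?_, ?_⟩, rfl⟩
        · rw [card_union_of_disjoint h]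
          exact hs.add_odd ht
        · exact (card_pos.1 hs.pos).mono subset_union_left
      exact sub_mem (Submodule.smul_of_tower_mem _ _ hmem)
        (Submodule.smul_of_tower_mem _ _ (Submodule.smul_of_tower_mem _ _ hmem))
  · rw [basis_mul_basis_of_not_disjoint b h,
      basis_mul_basis_of_not_disjoint b fun h' => h h'.symm, sub_self]
    exact zero_mem _

end CommRing

section Field

variable {K M I : Type*} [Field K] [AddCommGroup M] [Module K M] [LinearOrder I]

theorem basis_mem_span_commutators (b : Basis I K M) (h2 : (2 : K) ≠ 0) {s : Finset I}
    (hs : Even #s) (hne : s.Nonempty) :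
    b.ExteriorAlgebra s ∈ Submodule.span K (Set.image2 (fun x y => x * y - y * x)
      (Set.range b.ExteriorAlgebra) (Set.range b.ExteriorAlgebra)) := by
  obtain ⟨i, hi⟩ := hne
  set t := s.erase i
  obtain ⟨u, hu⟩ :=
    exists_basis_mul_basis_of_disjoint b (disjoint_singleton_left.2 (notMem_erase i s))
  rw [singleton_union, insert_erase hi] at hu
  have ht : Odd #t := by
    rw [card_erase_of_mem hi]
    exact Nat.Even.sub_odd (card_pos.2 ⟨i, hi⟩) hs odd_one
  have hcomm : b.ExteriorAlgebra {i} * b.ExteriorAlgebra t -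
      b.ExteriorAlgebra t * b.ExteriorAlgebra {i} = (2 : K) • u • b.ExteriorAlgebra s := by
    rw [basis_mul_basis_comm b t {i}, hu, card_singleton, mul_one, ht.neg_one_pow,
      Units.neg_smul, one_smul, sub_neg_eq_add, two_smul]
  have hbasis : b.ExteriorAlgebra s = u⁻¹ • (2 : K)⁻¹ • (b.ExteriorAlgebra {i} *
      b.ExteriorAlgebra t - b.ExteriorAlgebra t * b.ExteriorAlgebra {i}) := by
    rw [hcomm, smul_smul, inv_mul_cancel₀ h2, one_smul, inv_smul_smul]
  rw [hbasis]
  exact Submodule.smul_of_tower_mem _ _ (Submodule.smul_mem _ _ (Submodule.subset_span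
    (Set.mem_image2_of_mem (Set.mem_range_self _) (Set.mem_range_self _))))

theorem span_commutators_eq_span_basis_even (b : Basis I K M) (h2 : (2 : K) ≠ 0) :
    Submodule.span K {z | ∃ x y : ExteriorAlgebra K M, z = x * y - y * x} =
      Submodule.span K (b.ExteriorAlgebra '' {s | Even #s ∧ s.Nonempty}) := by
  rw [Submodule.span_commutators_eq_span_image2 b.ExteriorAlgebra.span_eq]
  refine le_antisymm (Submodule.span_le.2 ?_) (Submodule.span_le.2 ?_)
  · rintro _ ⟨_, ⟨s, rfl⟩, _, ⟨t, rfl⟩, rfl⟩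
    exact commutator_basis_mem_span_even b s t
  · rintro _ ⟨s, ⟨hs, hne⟩, rfl⟩
    exact basis_mem_span_commutators b h2 hs hne

theorem finrank_span_commutators [Fintype I] (b : Basis I K M) (h2 : (2 : K) ≠ 0) :
    finrank K (Submodule.span K {z | ∃ x y : ExteriorAlgebra K M, z = x * y - y * x}) =
      #{s : Finset I | Even #s ∧ s.Nonempty} := by
  set E : Finset (Finset I) := {s | Even #s ∧ s.Nonempty}
  have himage : b.ExteriorAlgebra '' {s | Even #s ∧ s.Nonempty} =
      Set.range (b.ExteriorAlgebra ∘ Subtype.val : E → _) := by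
    ext x
    simp [E]
  rw [span_commutators_eq_span_basis_even b h2, himage,
    finrank_span_eq_card (b.ExteriorAlgebra.linearIndependent.comp _ Subtype.val_injective),
    Fintype.card_coe]

end Field

end ExteriorAlgebra

/-- Let `k` be a field with `char k ≠ 2` and `Λ` the exterior algebra on `n ≥ 2`
generators over `k`.  The commutator subspace `[Λ,Λ]` (the `k`-span of all `ab - ba`)
has dimension `2^{n-1} - 1`, and `dim_k Λ/[Λ,Λ] = 2^{n-1} + 1`. -/
theorem commutator_subspace_dim (k : Type) [Field k] (hk : ringChar k ≠ 2)
    (n : ℕ) (hn : 2 ≤ n)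
    (C : Submodule k (ExteriorAlgebra k (Fin n → k)))
    (hC : C = Submodule.span k
      {z | ∃ a b : ExteriorAlgebra k (Fin n → k), z = a * b - b * a}) :
    Module.finrank k C = 2 ^ (n - 1) - 1 ∧
      Module.finrank k (ExteriorAlgebra k (Fin n → k) ⧸ C) = 2 ^ (n - 1) + 1 := by
  have : NeZero n := ⟨by omega⟩
  let e := Pi.basisFun k (Fin n)
  have hcount := card_filter_even_card_nonempty_add_one (α := Fin n)
  rw [Fintype.card_fin] at hcount
  have hfinrankC : finrank k C = 2 ^ (n - 1) - 1 := by
    rw [hC, finrank_span_commutators e (Ring.two_ne_zero hk)]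
    omega
  have hfinrank : finrank k (ExteriorAlgebra k (Fin n → k)) = 2 ^ n := by
    rw [finrank_eq_card_basis e.ExteriorAlgebra, Fintype.card_finset, Fintype.card_fin]
  have : FiniteDimensional k (ExteriorAlgebra k (Fin n → k)) :=
    e.ExteriorAlgebra.finiteDimensional_of_finite
  have hquot := C.finrank_quotient_add_finrank
  have hpow : 2 ^ n = 2 * 2 ^ (n - 1) := by rw [← pow_succ', Nat.sub_add_cancel (by omega)]
  have hpos := Nat.one_le_two_pow (n := n - 1)
  exact ⟨hfinrankC, by omega⟩
end
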